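/- (Nonzero eigenvalues of the reduced DMD operator are eigenvalues of the full operator) If w ∈ ℝ^r satisfies Ã w = λ w with w ≠ 0 and λ ≠ 0, then the DMD mode φ = Y V Σ^{-1} w satisfies φ ≠ 0 and A φ = λ φ; hence every nonzero eigenvalue of Ã is an eigenvalue of A, with eigenvector given by the corresponding DMD mode. -/
import Mathlib


open Matrix

/-- Nonzero eigenvalues of the reduced DMD operator `Ã = Uᵀ Y V Σ⁻¹` are
eigenvalues of the full operator `A = Y V Σ⁻¹ Uᵀ`, with eigenvector the
corresponding DMD mode `φ = Y V Σ⁻¹ w`. -/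
theorem reduced_dmd_eigenvalue_to_full
    (n m r : ℕ)
    (Y : Matrix (Fin n) (Fin m) ℝ)
    (U : Matrix (Fin n) (Fin r) ℝ) (V : Matrix (Fin m) (Fin r) ℝ)
    (S : Matrix (Fin r) (Fin r) ℝ) (hS : IsUnit S)
    (A : Matrix (Fin n) (Fin n) ℝ) (hA : A = Y * V * S⁻¹ * Uᵀ)
    (Atil : Matrix (Fin r) (Fin r) ℝ) (hAtil : Atil = Uᵀ * Y * V * S⁻¹)
    (w : Fin r → ℝ) (lam : ℝ)
    (hw : w ≠ 0) (hlam : lam ≠ 0) (heig : Atil.mulVec w = lam • w)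
    (φ : Fin n → ℝ) (hφ : φ = (Y * V * S⁻¹).mulVec w) :
    φ ≠ 0 ∧ A.mulVec φ = lam • φ := by
  have hUφ : Uᵀ.mulVec φ = lam • w := by
    rw [hφ, mulVec_mulVec, show Uᵀ * (Y * V * S⁻¹) = Atil by simp [hAtil, Matrix.mul_assoc]]
    exact heig
  constructor
  · intro h0
    apply hw
    have : lam • w = 0 := by rw [← hUφ, h0, mulVec_zero]
    exact (smul_eq_zero.mp this).resolve_left hlam
  · rw [hA, ← mulVec_mulVec, hUφ, mulVec_smul, hφ]
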